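/- Fix real constants α_1, α_2, α_3, t_0, λ_1, λ_2, λ_3, let τ²(w) and F(w) be as in the generalized Darboux–Brioschi–Halphen system, and let X_1(w) = (1,1,1), X_2(w) = (w_1, w_2, w_3), X_3(w) = −F(w). Define vector fields on ℝ × ℝ³ by X̄(t,w) = (1, F(w)) and Y(t,w) = (t_0, λ_1 X_1(w) − (2 λ_1 t − λ_2) X_2(w) + (λ_1 t² − λ_2 t + λ_3) X_3(w)). Then [Y, X̄] = 0; that is, Y is a Lie symmetry of the generalized Darboux–Brioschi–Halphen system for every choice of the constants t_0, λ_1, λ_2, λ_3. -/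

import Mathlib

/-!
Only two properties of `F` matter. It is a homogeneous quadratic, so `DF(w) w = 2 F(w)`, and
`τ²` depends only on differences of the `wᵢ`, so `F(w + s(1,1,1)) = F(w) − 2s w − s²(1,1,1)`,
whence `DF(w)(1,1,1) = −2w`; both derivatives are the linear coefficients of `F` along a line.
Writing `q(t) = λ₁t² − λ₂t + λ₃`, the second component of `DX̄·Y − DY·X̄` then reduces to
`λ₁ (DF(w)(1,1,1) + 2w) − q'(t) (DF(w) w − 2F(w)) = 0`, the `q(t) DF(w)(F(w))` terms cancelling.
-/

open VectorField

section

variable {E : Type*} [NormedAddCommGroup E] [NormedSpace ℝ E]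

theorem fderiv_apply_eq_of_add_smul_eq {G : Type*} [NormedAddCommGroup G] [NormedSpace ℝ G]
    {f : E → G} {x v : E} {a b c : G} (hf : DifferentiableAt ℝ f x)
    (h : ∀ s : ℝ, f (x + s • v) = a + s • b + s ^ 2 • c) : fderiv ℝ f x v = b := by
  have hline : HasDerivAt (fun s : ℝ => a + s • b + s ^ 2 • c) b 0 := by
    simpa using (((hasDerivAt_id (0 : ℝ)).smul_const b).const_add a).fun_add
      ((hasDerivAt_pow 2 (0 : ℝ)).smul_const c)
  rw [← hf.lineDeriv_eq_fderiv, lineDeriv]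
  simp_rw [h]
  exact hline.deriv

theorem fderiv_apply_self_of_smul_eq_sq_smul {G : Type*} [NormedAddCommGroup G]
    [NormedSpace ℝ G] {f : E → G} {x : E} (hf : DifferentiableAt ℝ f x)
    (h : ∀ c : ℝ, f (c • x) = c ^ 2 • f x) : fderiv ℝ f x x = (2 : ℝ) • f x :=
  fderiv_apply_eq_of_add_smul_eq (a := f x) (c := f x) hf fun s => by
    rw [show x + s • x = (1 + s) • x by module, h]
    module

def autonomization (F : E → E) : ℝ × E → ℝ × E := fun p => (1, F p.2)

/- With `X₁ = v`, `X₂ = id`, `X₃ = -F`, the hypotheses on `F` in the next theorem amount to the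
`sl(2)` relations `[X₁, X₂] = X₁`, `[X₁, X₃] = 2 X₂`, `[X₂, X₃] = X₃`. -/
def sl2Symmetry (F : E → E) (v : E) (t₀ l₁ l₂ l₃ : ℝ) : ℝ × E → ℝ × E :=
  fun p => (t₀, l₁ • v - (2 * l₁ * p.1 - l₂) • p.2 + (l₁ * p.1 ^ 2 - l₂ * p.1 + l₃) • -F p.2)

theorem lieBracket_sl2Symmetry_autonomization_eq_zero {F : E → E} {v : E}
    (hF : Differentiable ℝ F) (h_euler : ∀ w, fderiv ℝ F w w = (2 : ℝ) • F w)
    (h_shift : ∀ w, fderiv ℝ F w v = (-2 : ℝ) • w) (t₀ l₁ l₂ l₃ : ℝ) :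
    lieBracket ℝ (sl2Symmetry F v t₀ l₁ l₂ l₃) (autonomization F) = 0 := by
  ext1 ⟨t, w⟩
  have hFsnd : HasFDerivAt (𝕜 := ℝ) (fun p : ℝ × E => F p.2) _ (t, w) :=
    (hF w).hasFDerivAt.comp _ hasFDerivAt_snd
  have hfst : HasFDerivAt (𝕜 := ℝ) (Prod.fst : ℝ × E → ℝ) _ (t, w) := hasFDerivAt_fst
  have hq : HasFDerivAt (𝕜 := ℝ) (fun p : ℝ × E => l₁ * p.1 ^ 2 - l₂ * p.1 + l₃) _ (t, w) :=
    (((hfst.pow 2).const_mul l₁).sub (hfst.const_mul l₂)).add_const l₃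
  have hX : HasFDerivAt (autonomization F) _ (t, w) :=
    (hasFDerivAt_const (𝕜 := ℝ) (1 : ℝ) (t, w)).prodMk hFsnd
  have hY : HasFDerivAt (sl2Symmetry F v t₀ l₁ l₂ l₃) _ (t, w) :=
    (hasFDerivAt_const (𝕜 := ℝ) t₀ (t, w)).prodMk
      (((hasFDerivAt_const (𝕜 := ℝ) (l₁ • v) (t, w)).sub
        (((hfst.const_mul (2 * l₁)).sub_const l₂).smul hasFDerivAt_snd)).add (hq.smul hFsnd.neg))
  rw [lieBracket, hX.fderiv, hY.fderiv]
  simp only [autonomization, sl2Symmetry, ContinuousLinearMap.prod_apply, zero_apply,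
    ContinuousLinearMap.comp_apply, ContinuousLinearMap.coe_snd', ContinuousLinearMap.coe_fst',
    add_apply, sub_apply, neg_apply, smul_apply, ContinuousLinearMap.smulRight_apply, map_add,
    map_sub, map_smul, map_neg, h_euler, h_shift, Prod.mk_sub_mk, sub_self, Pi.zero_apply,
    Prod.mk_eq_zero, true_and]
  module

end

def dbhTauSq (a1 a2 a3 : ℝ) (w : Fin 3 → ℝ) : ℝ :=
  a1 ^ 2 * (w 0 - w 1) * (w 2 - w 0) + a2 ^ 2 * (w 1 - w 2) * (w 0 - w 1) +
    a3 ^ 2 * (w 2 - w 0) * (w 1 - w 2)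

def dbhField (a1 a2 a3 : ℝ) (w : Fin 3 → ℝ) : Fin 3 → ℝ :=
  ![w 2 * w 1 - w 0 * w 2 - w 0 * w 1 + dbhTauSq a1 a2 a3 w,
    w 0 * w 2 - w 1 * w 0 - w 1 * w 2 + dbhTauSq a1 a2 a3 w,
    w 1 * w 0 - w 2 * w 1 - w 2 * w 0 + dbhTauSq a1 a2 a3 w]

theorem differentiable_dbhField (a1 a2 a3 : ℝ) : Differentiable ℝ (dbhField a1 a2 a3) :=
  differentiable_pi.2 fun i => by
    fin_cases i <;> simp [dbhField, dbhTauSq] <;> fun_prop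

theorem dbhField_smul (a1 a2 a3 c : ℝ) (w : Fin 3 → ℝ) :
    dbhField a1 a2 a3 (c • w) = c ^ 2 • dbhField a1 a2 a3 w := by
  ext i
  fin_cases i <;> simp [dbhField, dbhTauSq] <;> ring

theorem dbhField_add_smul_one (a1 a2 a3 s : ℝ) (w : Fin 3 → ℝ) :
    dbhField a1 a2 a3 (w + s • ![1, 1, 1]) =
      dbhField a1 a2 a3 w - (2 * s) • w - s ^ 2 • ![1, 1, 1] := by
  ext i
  fin_cases i <;> simp [dbhField, dbhTauSq, Matrix.vecHead, Matrix.vecTail] <;> ring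

theorem fderiv_dbhField_apply_self (a1 a2 a3 : ℝ) (w : Fin 3 → ℝ) :
    fderiv ℝ (dbhField a1 a2 a3) w w = (2 : ℝ) • dbhField a1 a2 a3 w :=
  fderiv_apply_self_of_smul_eq_sq_smul (differentiable_dbhField a1 a2 a3 w)
    (dbhField_smul a1 a2 a3 · w)

theorem fderiv_dbhField_apply_one (a1 a2 a3 : ℝ) (w : Fin 3 → ℝ) :
    fderiv ℝ (dbhField a1 a2 a3) w ![1, 1, 1] = (-2 : ℝ) • w :=
  fderiv_apply_eq_of_add_smul_eq (a := dbhField a1 a2 a3 w) (c := -![1, 1, 1])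
    (differentiable_dbhField a1 a2 a3 w) fun s => by
      rw [dbhField_add_smul_one]
      module

/-- For every choice of the constants `t₀, λ₁, λ₂, λ₃`, the vector field
`Y = t₀ ∂/∂t + λ₁ X₁ − (2λ₁ t − λ₂) X₂ + (λ₁ t² − λ₂ t + λ₃) X₃` commutes with the
autonomization `X̄ = ∂/∂t + F` of the generalized Darboux--Brioschi--Halphen system, i.e.
it is a Lie symmetry of that system. -/
theorem dbh_lie_symmetry (a1 a2 a3 t0 l1 l2 l3 : ℝ)
    (τsq : (Fin 3 → ℝ) → ℝ)
    (hτ : τsq = fun w => a1 ^ 2 * (w 0 - w 1) * (w 2 - w 0) +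
      a2 ^ 2 * (w 1 - w 2) * (w 0 - w 1) + a3 ^ 2 * (w 2 - w 0) * (w 1 - w 2))
    (F : (Fin 3 → ℝ) → Fin 3 → ℝ)
    (hF : F = fun w => ![w 2 * w 1 - w 0 * w 2 - w 0 * w 1 + τsq w,
      w 0 * w 2 - w 1 * w 0 - w 1 * w 2 + τsq w,
      w 1 * w 0 - w 2 * w 1 - w 2 * w 0 + τsq w])
    (X1 X2 X3 : (Fin 3 → ℝ) → Fin 3 → ℝ)
    (h1 : X1 = fun _ => ![1, 1, 1])
    (h2 : X2 = fun w => w)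
    (h3 : X3 = -F)
    (Xbar Y : ℝ × (Fin 3 → ℝ) → ℝ × (Fin 3 → ℝ))
    (hXbar : Xbar = fun p => (1, F p.2))
    (hY : Y = fun p => (t0, l1 • X1 p.2 - (2 * l1 * p.1 - l2) • X2 p.2 +
      (l1 * p.1 ^ 2 - l2 * p.1 + l3) • X3 p.2)) :
    lieBracket ℝ Y Xbar = 0 := by
  subst hτ h1 h2 h3 hXbar hY
  obtain rfl : F = dbhField a1 a2 a3 := hF
  exact lieBracket_sl2Symmetry_autonomization_eq_zero (differentiable_dbhField a1 a2 a3)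
    (fderiv_dbhField_apply_self a1 a2 a3) (fderiv_dbhField_apply_one a1 a2 a3) t0 l1 l2 l3
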